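/- arXiv:1511.05388 — 3 statements merged into one kernel-verified Lean document; each statement's English description precedes it below -/
import Mathlib

section
/- For integers q, i, s, t with 0 ≤ s ≤ i-1 ≤ q-1 and 0 ≤ t ≤ q-1, one has Σ_{k=0}^{s} Σ_{l=0}^{t} C(i,k)·C(k,i-l-1)·C(q-i,s-k)·C(s-k,q-i-t+l) = C(q,s)·C(s,q-t-1). -/
/-!
For fixed `k`, substituting `m = i - 1 - l` turns the inner sum into the Vandermonde convolution
`∑ₘ C(k, m) C(s - k, q - t - 1 - m) = C(s, q - t - 1)`; the window `i - 1 - t ≤ m ≤ i - 1` covers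
its whole support as soon as `s - k ≤ q - i`, and otherwise the factor `C(q - i, s - k)` vanishes.
The remaining sum `∑ₖ C(i, k) C(q - i, s - k)` is Vandermonde again and equals `C(q, s)`.
-/

/-- The binomial coefficient `C(n,k)` extended to all integers, taken to be `0`
when `k < 0` or `k > n`. -/
def intChoose (n k : ℤ) : ℤ :=
  if 0 ≤ k ∧ k ≤ n then (n.toNat.choose k.toNat : ℤ) else 0

open Finset

lemma intChoose_of_neg {n k : ℤ} (hk : k < 0) : intChoose n k = 0 := by
  simp [intChoose, hk.not_ge]

lemma intChoose_of_lt {n k : ℤ} (h : n < k) : intChoose n k = 0 := by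
  simp [intChoose, h.not_ge]

lemma intChoose_natCast (n k : ℕ) : intChoose n k = n.choose k := by
  by_cases h : k ≤ n
  · simp [intChoose, h]
  · rw [intChoose_of_lt (by omega), Nat.choose_eq_zero_of_lt (by omega), Nat.cast_zero]

lemma sum_Icc_intChoose_mul_intChoose (a b : ℕ) (n : ℤ) :
    ∑ k ∈ Icc 0 n, intChoose a k * intChoose b (n - k) = intChoose (a + b) n := by
  rcases lt_or_ge n 0 with hn | hn
  · rw [Icc_eq_empty (by omega), sum_empty, intChoose_of_neg hn]
  lift n to ℕ using hn
  rw [Int.Icc_eq_finset_map, sum_map]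
  simp only [Function.Embedding.trans_apply, Nat.castEmbedding_apply, addLeftEmbedding_apply,
    zero_add]
  rw [show ((n : ℤ) + 1 - 0).toNat = n + 1 by omega, ← Nat.cast_add, intChoose_natCast,
    Nat.add_choose_eq, Nat.sum_antidiagonal_eq_sum_range_succ_mk, Nat.cast_sum]
  refine sum_congr rfl fun k hk => ?_
  rw [mem_range] at hk
  rw [← Nat.cast_sub (by omega), intChoose_natCast, intChoose_natCast, Nat.cast_mul]

/-- Vandermonde's identity, summed over any finset containing the support. -/
theorem sum_intChoose_mul_intChoose {a b : ℤ} (ha : 0 ≤ a) (hb : 0 ≤ b) (n : ℤ) {s : Finset ℤ}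
    (hs : ∀ k, 0 ≤ k → k ≤ a → 0 ≤ n - k → n - k ≤ b → k ∈ s) :
    ∑ k ∈ s, intChoose a k * intChoose b (n - k) = intChoose (a + b) n := by
  lift a to ℕ using ha
  lift b to ℕ using hb
  rw [← sum_Icc_intChoose_mul_intChoose]
  have hvanish : ∀ k, (k < 0 ∨ (a : ℤ) < k ∨ n - k < 0 ∨ (b : ℤ) < n - k) →
      intChoose a k * intChoose b (n - k) = 0 := by
    rintro k (h | h | h | h)
    · rw [intChoose_of_neg h, zero_mul]
    · rw [intChoose_of_lt h, zero_mul]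
    · rw [intChoose_of_neg h, mul_zero]
    · rw [intChoose_of_lt h, mul_zero]
  refine sum_congr_of_eq_on_inter (fun k _ hk => hvanish k ?_) (fun k hk hks => hvanish k ?_)
    fun _ _ _ => rfl
  · rw [mem_Icc] at hk; omega
  · rw [mem_Icc] at hk
    by_contra! h
    exact hks (hs k (by omega) (by omega) (by omega) (by omega))

lemma sum_Icc_intChoose_sub_mul_intChoose_add {a b : ℤ} (ha : 0 ≤ a) (hb : 0 ≤ b) {c n t : ℤ}
    (hac : a ≤ c) (hcn : c - t ≤ n - b) :
    ∑ l ∈ Icc 0 t, intChoose a (c - l) * intChoose b (n - c + l) = intChoose (a + b) n := by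
  rw [← sum_intChoose_mul_intChoose ha hb n (s := Icc (c - t) c)
    fun m _ hma _ hmb => mem_Icc.2 ⟨by omega, by omega⟩]
  refine sum_nbij' (c - ·) (c - ·) (fun l hl => ?_) (fun m hm => ?_) (fun l _ => by simp)
    (fun m _ => by simp) fun l _ => by ring_nf
  · rw [mem_Icc] at hl ⊢; omega
  · rw [mem_Icc] at hm ⊢; omega

theorem stmt_11_general (q i s t : ℤ) (hs0 : 0 ≤ s) (hsi : s ≤ i - 1) (hiq : i - 1 ≤ q - 1) :
    ∑ k ∈ Finset.Icc (0 : ℤ) s, ∑ l ∈ Finset.Icc (0 : ℤ) t,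
        intChoose i k * intChoose k (i - l - 1) * intChoose (q - i) (s - k)
          * intChoose (s - k) (q - i - t + l)
      = intChoose q s * intChoose s (q - t - 1) := by
  have inner : ∀ k ∈ Icc 0 s, intChoose (q - i) (s - k) *
      ∑ l ∈ Icc 0 t, intChoose k (i - 1 - l) * intChoose (s - k) (q - t - 1 - (i - 1) + l)
        = intChoose (q - i) (s - k) * intChoose s (q - t - 1) := by
    intro k hk
    rw [mem_Icc] at hk
    by_cases hkq : i + s - q ≤ k
    · rw [sum_Icc_intChoose_sub_mul_intChoose_add hk.1 (by omega) (by omega) (by omega),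
        add_sub_cancel]
    · rw [intChoose_of_lt (by omega), zero_mul, zero_mul]
  calc _ = ∑ k ∈ Icc 0 s, intChoose i k * (intChoose (q - i) (s - k) *
        ∑ l ∈ Icc 0 t, intChoose k (i - 1 - l) * intChoose (s - k) (q - t - 1 - (i - 1) + l)) :=
        sum_congr rfl fun k _ => by
          rw [mul_sum, mul_sum]
          refine sum_congr rfl fun l _ => ?_
          ring_nf
    _ = ∑ k ∈ Icc 0 s, intChoose i k * intChoose (q - i) (s - k) * intChoose s (q - t - 1) :=
        sum_congr rfl fun k hk => by rw [inner k hk, mul_assoc]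
    _ = _ := by
      rw [← sum_mul, sum_intChoose_mul_intChoose (by omega) (by omega) s
        fun k hk _ _ _ => mem_Icc.2 ⟨hk, by omega⟩, add_sub_cancel]

/-- for integers `q, i, s, t` with `0 ≤ s ≤ i-1 ≤ q-1` and `0 ≤ t ≤ q-1`,
`∑_{k=0}^{s} ∑_{l=0}^{t} C(i,k)·C(k,i-l-1)·C(q-i,s-k)·C(s-k,q-i-t+l) = C(q,s)·C(s,q-t-1)`. -/
theorem stmt_11 (q i s t : ℤ) (hs0 : 0 ≤ s) (hsi : s ≤ i - 1) (hiq : i - 1 ≤ q - 1)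
    (ht0 : 0 ≤ t) (htq : t ≤ q - 1) :
    ∑ k ∈ Finset.Icc (0 : ℤ) s, ∑ l ∈ Finset.Icc (0 : ℤ) t,
        intChoose i k * intChoose k (i - l - 1) * intChoose (q - i) (s - k)
          * intChoose (s - k) (q - i - t + l)
      = intChoose q s * intChoose s (q - t - 1) :=
  stmt_11_general q i s t hs0 hsi hiq
end

section
/- Let B be a k-algebra with an automorphism ρ and Δ(a) = a - ρ(a). Then for every integer l ≥ 0 and all a, b ∈ B: Δ^l(ab) = Σ_{s=0}^{l} Σ_{t=0}^{l} (-1)^{s+t-l} C(l,s)·C(s,l-t)·Δ^s(a)·Δ^t(b), where C denotes binomial coefficients (zero outside range). -/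
open Finset

private def T (l s t : ℕ) : ℤ :=
  ∑ j ∈ range (l + 1), (-1) ^ j * (l.choose j : ℤ) * (j.choose s : ℤ) * (j.choose t : ℤ)

private lemma TT (l s t : ℕ) :
    ∑ j ∈ range (l + 1), (-1:ℤ) ^ j * (l.choose j : ℤ) * (j.choose s : ℤ) * (j.choose t : ℤ)
      = T l s t := rfl

private lemma T_zero_right (l s t : ℕ) (h : l < t) : T l s t = 0 := by
  unfold T
  refine Finset.sum_eq_zero fun j hj => ?_
  rw [mem_range] at hj
  rw [Nat.choose_eq_zero_of_lt (show j < t by omega)]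
  simp

private lemma Trec (l s t : ℕ) :
    T (l + 1) s t = T l s t +
      ∑ j ∈ range (l + 1),
        (-1) ^ (j + 1) * (l.choose j : ℤ) * ((j+1).choose s : ℤ) * ((j+1).choose t : ℤ) := by
  have h1 : T (l + 1) s t =
      (∑ j ∈ range (l + 1),
        (-1:ℤ) ^ (j+1) * ((l+1).choose (j+1) : ℤ) * ((j+1).choose s : ℤ) * ((j+1).choose t : ℤ))
      + (-1:ℤ) ^ 0 * ((l+1).choose 0 : ℤ) * ((0:ℕ).choose s : ℤ) * ((0:ℕ).choose t : ℤ) :=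
    Finset.sum_range_succ' (fun j => (-1:ℤ) ^ j * ((l+1).choose j : ℤ) * (j.choose s : ℤ) * (j.choose t : ℤ)) (l+1)
  rw [h1]
  have expand : ∀ j ∈ range (l + 1),
      (-1:ℤ) ^ (j+1) * ((l+1).choose (j+1) : ℤ) * ((j+1).choose s : ℤ) * ((j+1).choose t : ℤ)
      = (-1) ^ (j + 1) * (l.choose j : ℤ) * ((j+1).choose s : ℤ) * ((j+1).choose t : ℤ)
        + (-1) ^ (j+1) * (l.choose (j+1) : ℤ) * ((j+1).choose s : ℤ) * ((j+1).choose t : ℤ) := by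
    intro j hj
    rw [Nat.choose_succ_succ]
    push_cast
    ring
  rw [Finset.sum_congr rfl expand, Finset.sum_add_distrib]
  have h2 : ∑ j ∈ range (l+1),
      (-1:ℤ) ^ (j+1) * (l.choose (j+1) : ℤ) * ((j+1).choose s : ℤ) * ((j+1).choose t : ℤ)
      = T l s t - ((0:ℕ).choose s : ℤ) * ((0:ℕ).choose t : ℤ) := by
    have h3 : T l s t =
        (∑ j ∈ range l,
          (-1:ℤ) ^ (j+1) * (l.choose (j+1) : ℤ) * ((j+1).choose s : ℤ) * ((j+1).choose t : ℤ))
        + (-1:ℤ) ^ 0 * (l.choose 0 : ℤ) * ((0:ℕ).choose s : ℤ) * ((0:ℕ).choose t : ℤ) :=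
      Finset.sum_range_succ' (fun j => (-1:ℤ) ^ j * (l.choose j : ℤ) * (j.choose s : ℤ) * (j.choose t : ℤ)) l
    rw [Finset.sum_range_succ, h3]
    rw [Nat.choose_succ_self]
    simp only [Nat.choose_zero_right, Nat.cast_zero, Nat.cast_one]
    ring
  rw [h2]
  simp only [Nat.choose_zero_right, Nat.cast_one]
  ring

private lemma Tval : ∀ l s t : ℕ, t ≤ l →
    T l s t = (-1) ^ l * (l.choose s : ℤ) * (s.choose (l - t) : ℤ) := by
  intro l
  induction l with
  | zero =>
    intro s t ht
    interval_cases t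
    unfold T
    simp
  | succ l ih =>
    intro s t ht
    rw [Trec]
    rcases s with _ | s' <;> rcases t with _ | t''
    · -- s = 0, t = 0
      have expand : ∀ j ∈ range (l+1),
          (-1:ℤ) ^ (j+1) * (l.choose j : ℤ) * ((j+1).choose 0 : ℤ) * ((j+1).choose 0 : ℤ)
          = -((-1:ℤ) ^ j * (l.choose j : ℤ) * (j.choose 0 : ℤ) * (j.choose 0 : ℤ)) := by
        intro j hj
        simp only [Nat.choose_zero_right]
        push_cast
        ring
      rw [Finset.sum_congr rfl expand, Finset.sum_neg_distrib, TT]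
      rw [Nat.choose_eq_zero_of_lt (show 0 < l + 1 - 0 by omega)]
      push_cast
      ring
    · -- s = 0, t = t''+1
      have expand : ∀ j ∈ range (l+1),
          (-1:ℤ) ^ (j+1) * (l.choose j : ℤ) * ((j+1).choose 0 : ℤ) * ((j+1).choose (t''+1) : ℤ)
          = -((-1:ℤ) ^ j * (l.choose j : ℤ) * (j.choose 0 : ℤ) * (j.choose t'' : ℤ))
            + -((-1:ℤ) ^ j * (l.choose j : ℤ) * (j.choose 0 : ℤ) * (j.choose (t''+1) : ℤ)) := by
        intro j hj
        rw [Nat.choose_succ_succ j t'']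
        simp only [Nat.choose_zero_right]
        push_cast
        ring
      rw [Finset.sum_congr rfl expand, Finset.sum_add_distrib, Finset.sum_neg_distrib,
        Finset.sum_neg_distrib, TT, TT]
      rw [ih 0 t'' (by omega)]
      have hm : l + 1 - (t'' + 1) = l - t'' := by omega
      rw [hm]
      simp only [Nat.choose_zero_right, Nat.cast_one]
      ring
    · -- s = s'+1, t = 0
      have expand : ∀ j ∈ range (l+1),
          (-1:ℤ) ^ (j+1) * (l.choose j : ℤ) * ((j+1).choose (s'+1) : ℤ) * ((j+1).choose 0 : ℤ)
          = -((-1:ℤ) ^ j * (l.choose j : ℤ) * (j.choose s' : ℤ) * (j.choose 0 : ℤ))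
            + -((-1:ℤ) ^ j * (l.choose j : ℤ) * (j.choose (s'+1) : ℤ) * (j.choose 0 : ℤ)) := by
        intro j hj
        rw [Nat.choose_succ_succ j s']
        simp only [Nat.choose_zero_right]
        push_cast
        ring
      rw [Finset.sum_congr rfl expand, Finset.sum_add_distrib, Finset.sum_neg_distrib,
        Finset.sum_neg_distrib, TT, TT]
      rw [ih s' 0 (by omega), ih (s'+1) 0 (by omega)]
      have key : ((l+1).choose (s'+1) : ℤ) * ((s'+1).choose (l+1) : ℤ)
          = (l.choose s' : ℤ) * (s'.choose l : ℤ) := by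
        rcases lt_trichotomy s' l with h | h | h
        · rw [Nat.choose_eq_zero_of_lt (show s' < l from h),
            Nat.choose_eq_zero_of_lt (show s' + 1 < l + 1 by omega)]
          push_cast; ring
        · subst h
          simp [Nat.choose_self]
        · rw [Nat.choose_eq_zero_of_lt (show l < s' from h),
            Nat.choose_eq_zero_of_lt (show l + 1 < s' + 1 by omega)]
          push_cast; ring
      simp only [Nat.sub_zero] at *
      linear_combination ((-1:ℤ)) ^ l * key
    · -- s = s'+1, t = t''+1
      have expand : ∀ j ∈ range (l+1),
          (-1:ℤ) ^ (j+1) * (l.choose j : ℤ) * ((j+1).choose (s'+1) : ℤ) * ((j+1).choose (t''+1) : ℤ)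
          = (-((-1:ℤ) ^ j * (l.choose j : ℤ) * (j.choose s' : ℤ) * (j.choose t'' : ℤ))
              + -((-1:ℤ) ^ j * (l.choose j : ℤ) * (j.choose s' : ℤ) * (j.choose (t''+1) : ℤ)))
            + (-((-1:ℤ) ^ j * (l.choose j : ℤ) * (j.choose (s'+1) : ℤ) * (j.choose t'' : ℤ))
              + -((-1:ℤ) ^ j * (l.choose j : ℤ) * (j.choose (s'+1) : ℤ) * (j.choose (t''+1) : ℤ))) := by
        intro j hj
        rw [Nat.choose_succ_succ j s', Nat.choose_succ_succ j t'']
        push_cast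
        ring
      rw [Finset.sum_congr rfl expand, Finset.sum_add_distrib, Finset.sum_add_distrib,
        Finset.sum_add_distrib, Finset.sum_neg_distrib, Finset.sum_neg_distrib,
        Finset.sum_neg_distrib, Finset.sum_neg_distrib, TT, TT, TT, TT]
      have p1 : (((l+1)).choose (s'+1) : ℤ) = (l.choose s' : ℤ) + (l.choose (s'+1) : ℤ) := by
        exact_mod_cast Nat.choose_succ_succ l s'
      rcases Nat.lt_or_ge t'' l with hcase | hcase
      · -- t''+1 ≤ l : all four via ih
        rw [ih s' t'' (by omega), ih s' (t''+1) (by omega),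
          ih (s'+1) t'' (by omega), ih (s'+1) (t''+1) (by omega)]
        have h1 : l - t'' = (l - (t''+1)) + 1 := by omega
        have h2 : l + 1 - (t''+1) = (l - (t''+1)) + 1 := by omega
        rw [h1, h2]
        have p2 : (((s'+1)).choose ((l - (t''+1))+1) : ℤ)
            = (s'.choose (l - (t''+1)) : ℤ) + (s'.choose ((l - (t''+1))+1) : ℤ) := by
          exact_mod_cast Nat.choose_succ_succ s' (l - (t''+1))
        rw [p1, p2]
        ring
      · -- t'' = l, t = l+1
        have ht'' : t'' = l := by omega
        rw [ht'']
        rw [T_zero_right l s' (l+1) (by omega), T_zero_right l (s'+1) (l+1) (by omega)]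
        rw [ih s' l (by omega), ih (s'+1) l (by omega)]
        simp only [Nat.sub_self, Nat.choose_zero_right, Nat.cast_one]
        rw [p1]
        ring

open Finset

private lemma one_sub_pow {R : Type*} [Ring R] (g : R) (n : ℕ) :
    (1 - g) ^ n = ∑ j ∈ range (n + 1), ((-1 : ℤ) ^ j * (n.choose j : ℤ)) • g ^ j := by
  rw [sub_eq_neg_add]
  rw [Commute.add_pow (Commute.one_right (-g)) n]
  refine Finset.sum_congr rfl fun j hj => ?_
  rw [one_pow, mul_one, neg_pow, zsmul_eq_mul, Int.cast_mul, Int.cast_pow, Int.cast_neg,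
    Int.cast_one, Int.cast_natCast, mul_assoc, ← (Nat.cast_commute (n.choose j) (g ^ j)).eq]
  rw [mul_assoc]

/-- for a `k`-algebra `B` with automorphism `ρ`, set `Δ = id - ρ` as a
`k`-linear endomorphism.  Then for every `l ≥ 0` and all `a, b ∈ B`:
`Δ^l(ab) = ∑_{s=0}^{l} ∑_{t=0}^{l} (-1)^{s+t-l} C(l,s)·C(s,l-t)·Δ^s(a)·Δ^t(b)`.
(The sign `(-1)^{s+t-l}` is written as `(-1)^{s+t+l}`, which is equal to it.) -/
theorem stmt_13 (k B : Type*) [Field k] [Ring B] [Algebra k B]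
    (ρ : B ≃ₐ[k] B) (Δ : Module.End k B)
    (hΔ : Δ = LinearMap.id - ρ.toLinearMap) (l : ℕ) (a b : B) :
    (Δ ^ l) (a * b)
      = ∑ s ∈ Finset.range (l + 1), ∑ t ∈ Finset.range (l + 1),
          ((-1 : ℤ) ^ (s + t + l) * (l.choose s : ℤ) * (s.choose (l - t) : ℤ)) •
            ((Δ ^ s) a * (Δ ^ t) b) := by
  set g := ρ.toLinearMap with hg
  have hΔ' : Δ = 1 - g := hΔ
  have hρ : g = 1 - Δ := by rw [hΔ']; abel
  have gmul : ∀ (j : ℕ) (x y : B), (g ^ j) (x * y) = (g ^ j) x * (g ^ j) y := by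
    intro j
    induction j with
    | zero => intro x y; simp
    | succ j ihj =>
      intro x y
      rw [pow_succ', Module.End.mul_apply, Module.End.mul_apply, Module.End.mul_apply, ihj]
      show ρ _ = ρ _ * ρ _
      rw [map_mul]
  have expandg : ∀ j ≤ l, ∀ x : B,
      (g ^ j) x = ∑ s ∈ range (l + 1), ((-1 : ℤ) ^ s * (j.choose s : ℤ)) • ((Δ ^ s) x) := by
    intro j hj x
    have h1 : (g ^ j) x = ∑ s ∈ range (j + 1), ((-1 : ℤ) ^ s * (j.choose s : ℤ)) • ((Δ ^ s) x) := by
      conv_lhs => rw [hρ]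
      rw [one_sub_pow]
      simp only [LinearMap.sum_apply, LinearMap.smul_apply]
    rw [h1]
    refine Finset.sum_subset ?_ ?_
    · intro u hu; rw [mem_range] at *; omega
    · intro s hs hs2
      rw [mem_range] at hs hs2
      rw [Nat.choose_eq_zero_of_lt (by omega)]
      simp
  have step1 : (Δ ^ l) (a * b)
      = ∑ j ∈ range (l + 1), ((-1 : ℤ) ^ j * (l.choose j : ℤ)) • ((g ^ j) a * (g ^ j) b) := by
    conv_lhs => rw [hΔ']
    rw [one_sub_pow]
    simp only [LinearMap.sum_apply, LinearMap.smul_apply]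
    exact Finset.sum_congr rfl fun j hj => by rw [gmul j a b]
  rw [step1]
  have step2 : ∀ j ∈ range (l + 1),
      ((-1 : ℤ) ^ j * (l.choose j : ℤ)) • ((g ^ j) a * (g ^ j) b)
      = ∑ s ∈ range (l + 1), ∑ t ∈ range (l + 1),
          ((-1 : ℤ) ^ (j + s + t) * (l.choose j : ℤ) * (j.choose s : ℤ) * (j.choose t : ℤ)) •
            ((Δ ^ s) a * (Δ ^ t) b) := by
    intro j hj
    rw [mem_range] at hj
    rw [expandg j (by omega) a, expandg j (by omega) b, Finset.sum_mul_sum, Finset.smul_sum]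
    refine Finset.sum_congr rfl fun s hs => ?_
    rw [Finset.smul_sum]
    refine Finset.sum_congr rfl fun t ht => ?_
    rw [smul_mul_smul_comm, smul_smul]
    congr 1
    ring
  rw [Finset.sum_congr rfl step2]
  rw [Finset.sum_comm]
  refine Finset.sum_congr rfl fun s hs => ?_
  rw [Finset.sum_comm]
  refine Finset.sum_congr rfl fun t ht => ?_
  rw [← Finset.sum_smul]
  congr 1
  rw [mem_range] at hs ht
  have key : ∑ j ∈ range (l + 1),
      (-1 : ℤ) ^ (j + s + t) * (l.choose j : ℤ) * (j.choose s : ℤ) * (j.choose t : ℤ)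
      = (-1 : ℤ) ^ (s + t) * T l s t := by
    rw [← TT l s t, Finset.mul_sum]
    refine Finset.sum_congr rfl fun j hj => ?_
    rw [pow_add, pow_add]
    ring
  rw [key, Tval l s t (by omega)]
  rw [pow_add, pow_add]
  ring
end

section
/- Let B be a G-graded k-algebra for a group G, and M, N G-graded B-bimodules. Define Hom_{B^e}(M,N)_0 as the space of bimodule maps f with f(M_α) ⊆ N_α for all α ∈ G, and Hom_{B^e}(M,N)_1 as the space of bimodule maps f with f(x)_α = 0 for all α ∈ G and x ∈ M_α. Then Hom_{B^e}(M,N) = Hom_{B^e}(M,N)_0 ⊕ Hom_{B^e}(M,N)_1 as vector spaces. -/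
/-!
Every `k`-linear map `f : M → N` has a diagonal part `f₀`, defined on `M_α` as `x ↦ (f x)_α`;
then `f₀` preserves degrees and `f - f₀` kills every diagonal component, and a map doing both is
zero. The only point is that `f₀` is again a bimodule map: multiplication by a homogeneous element
of `B`, on either side, shifts degrees along an injective map `G → G`, and taking components
commutes with such shifts.
-/

open MulOpposite DirectSum

namespace DirectSum

section Shift

variable {ι M N σ τ : Type*} [DecidableEq ι] [AddCommMonoid M] [AddCommMonoid N]
  [SetLike σ M] [AddSubmonoidClass σ M] [SetLike τ N] [AddSubmonoidClass τ N]
  {ℳ : ι → σ} {𝒩 : ι → τ} [Decomposition ℳ] [Decomposition 𝒩]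

theorem coe_decompose_map_of_mapsTo (φ : M →+ N) {s : ι → ι} (hs : s.Injective)
    (hφ : ∀ i, ∀ x ∈ ℳ i, φ x ∈ 𝒩 (s i)) (x : M) (i : ι) :
    (decompose 𝒩 (φ x) (s i) : N) = φ (decompose ℳ x i) := by
  induction x using Decomposition.inductionOn ℳ with
  | zero => simp
  | @homogeneous j x =>
    by_cases hji : j = i
    · subst hji
      rw [decompose_of_mem_same _ (hφ j x x.2), decompose_coe, of_eq_same]
    · rw [decompose_of_mem_ne _ (hφ j x x.2) (hs.ne hji), decompose_coe,
        of_eq_of_ne _ _ _ (Ne.symm hji), ZeroMemClass.coe_zero, map_zero]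
  | add x y hx hy => simp [hx, hy]

end Shift

theorem sub_coe_decompose_mem_iSup_ne {ι R N : Type*} [DecidableEq ι] [Ring R] [AddCommGroup N]
    [Module R N] (𝒩 : ι → Submodule R N) [Decomposition 𝒩] (y : N) (i : ι) :
    y - decompose 𝒩 y i ∈ ⨆ j ∈ {j : ι | j ≠ i}, 𝒩 j := by
  induction y using Decomposition.inductionOn 𝒩 with
  | zero => simp
  | @homogeneous j y =>
    by_cases hji : j = i
    · subst hji
      simp
    · rw [decompose_of_mem_ne _ y.2 hji, sub_zero]
      exact Submodule.mem_iSup_of_mem j (Submodule.mem_iSup_of_mem hji y.2)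
  | add x y hx hy =>
    rw [decompose_add, add_apply, Submodule.coe_add, add_sub_add_comm]
    exact add_mem hx hy

end DirectSum

section DiagPart

variable {ι k M N : Type*} [DecidableEq ι] [Semiring k] [AddCommMonoid M] [Module k M]
  [AddCommMonoid N] [Module k N] (ℳ : ι → Submodule k M) (𝒩 : ι → Submodule k N)
  [Decomposition ℳ] [Decomposition 𝒩]

noncomputable def diagPart (f : M →ₗ[k] N) : M →ₗ[k] N :=
  toModule k ι N (fun i => (𝒩 i).subtype ∘ₗ component k ι (fun i => 𝒩 i) i ∘ₗ
      (decomposeLinearEquiv 𝒩).toLinearMap ∘ₗ f ∘ₗ (ℳ i).subtype) ∘ₗ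
    (decomposeLinearEquiv ℳ).toLinearMap

variable {ℳ 𝒩}

theorem diagPart_apply_of_mem (f : M →ₗ[k] N) {i : ι} {x : M} (hx : x ∈ ℳ i) :
    diagPart ℳ 𝒩 f x = decompose 𝒩 (f x) i := by
  have hdec : decomposeLinearEquiv ℳ x = lof k ι (fun i => ℳ i) i ⟨x, hx⟩ :=
    decomposeLinearEquiv_apply_coe ℳ i ⟨x, hx⟩
  simp only [diagPart, LinearMap.comp_apply, LinearEquiv.coe_coe, hdec, toModule_lof]
  rfl

theorem diagPart_map_of_mapsTo (f : M →ₗ[k] N) (φ : M →+ M) (ψ : N →+ N) {s : ι → ι}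
    (hs : s.Injective) (hφ : ∀ i, ∀ x ∈ ℳ i, φ x ∈ ℳ (s i))
    (hψ : ∀ i, ∀ y ∈ 𝒩 i, ψ y ∈ 𝒩 (s i)) (hf : ∀ x, f (φ x) = ψ (f x)) (x : M) :
    diagPart ℳ 𝒩 f (φ x) = ψ (diagPart ℳ 𝒩 f x) := by
  induction x using Decomposition.inductionOn ℳ with
  | zero => simp
  | @homogeneous i x =>
    rw [diagPart_apply_of_mem f (hφ i x x.2), diagPart_apply_of_mem f x.2, hf,
      coe_decompose_map_of_mapsTo ψ hs hψ]
  | add x y hx hy => simp only [map_add, hx, hy]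

end DiagPart

section Bimodule

variable {k G B M : Type*} [CommSemiring k] [Group G] [Semiring B] [Algebra k B]
  [AddCommMonoid M] [Module k M] [Module B M] [Module Bᵐᵒᵖ M]

def IsGradedBimodule (ℬ : G → Submodule k B) (ℳ : G → Submodule k M) : Prop :=
  ∀ α β γ : G, ∀ a ∈ ℬ α, ∀ x ∈ ℳ β, ∀ c ∈ ℬ γ, op c • (a • x) ∈ ℳ (α * β * γ)

variable {ℬ : G → Submodule k B} {ℳ : G → Submodule k M}

theorem IsGradedBimodule.smul_mem (hℳ : IsGradedBimodule ℬ ℳ) (hB1 : (1 : B) ∈ ℬ 1)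
    {α β : G} {a : B} (ha : a ∈ ℬ α) {x : M} (hx : x ∈ ℳ β) : a • x ∈ ℳ (α * β) := by
  simpa using hℳ α β 1 a ha x hx 1 hB1

theorem IsGradedBimodule.op_smul_mem (hℳ : IsGradedBimodule ℬ ℳ) (hB1 : (1 : B) ∈ ℬ 1)
    {β γ : G} {x : M} (hx : x ∈ ℳ β) {c : B} (hc : c ∈ ℬ γ) : op c • x ∈ ℳ (β * γ) := by
  simpa using hℳ 1 β γ 1 hB1 x hx c hc

variable [DecidableEq G] {N : Type*} [AddCommMonoid N] [Module k N] [Module B N] [Module Bᵐᵒᵖ N]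
  {𝒩 : G → Submodule k N} [Decomposition ℬ] [Decomposition ℳ] [Decomposition 𝒩]

theorem diagPart_smul (hB1 : (1 : B) ∈ ℬ 1) (hℳ : IsGradedBimodule ℬ ℳ)
    (h𝒩 : IsGradedBimodule ℬ 𝒩) {f : M →ₗ[k] N} (hf : ∀ (b : B) (x : M), f (b • x) = b • f x)
    (b : B) (x : M) : diagPart ℳ 𝒩 f (b • x) = b • diagPart ℳ 𝒩 f x := by
  induction b using Decomposition.inductionOn ℬ generalizing x with
  | zero => simp
  | @homogeneous α b =>
    exact diagPart_map_of_mapsTo f (DistribSMul.toAddMonoidHom M (b : B))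
      (DistribSMul.toAddMonoidHom N (b : B)) (mul_right_injective α)
      (fun _ _ hx => hℳ.smul_mem hB1 b.2 hx) (fun _ _ hy => h𝒩.smul_mem hB1 b.2 hy) (hf b) x
  | add a b ha hb => simp only [add_smul, map_add, ha, hb]

theorem diagPart_op_smul (hB1 : (1 : B) ∈ ℬ 1) (hℳ : IsGradedBimodule ℬ ℳ)
    (h𝒩 : IsGradedBimodule ℬ 𝒩) {f : M →ₗ[k] N}
    (hf : ∀ (c : Bᵐᵒᵖ) (x : M), f (c • x) = c • f x) (c : Bᵐᵒᵖ) (x : M) :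
    diagPart ℳ 𝒩 f (c • x) = c • diagPart ℳ 𝒩 f x := by
  induction c using MulOpposite.rec' generalizing x with | _ c => ?_
  induction c using Decomposition.inductionOn ℬ generalizing x with
  | zero => simp
  | @homogeneous γ c =>
    exact diagPart_map_of_mapsTo f (DistribSMul.toAddMonoidHom M (op (c : B)))
      (DistribSMul.toAddMonoidHom N (op (c : B))) (mul_left_injective γ)
      (fun _ _ hx => hℳ.op_smul_mem hB1 hx c.2) (fun _ _ hy => h𝒩.op_smul_mem hB1 hy c.2)
      (hf (op c)) x
  | add a b ha hb => simp only [op_add, add_smul, map_add, ha, hb]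

end Bimodule

theorem stmt_19_general (k G B M N : Type*) [Field k] [Group G] [DecidableEq G]
    [Ring B] [Algebra k B]
    [AddCommGroup M] [Module k M] [Module B M] [Module Bᵐᵒᵖ M]
    [AddCommGroup N] [Module k N] [Module B N] [Module Bᵐᵒᵖ N]
    -- the `G`-grading on `B`, `M` and `N`
    (ℬ : G → Submodule k B) (ℳ : G → Submodule k M) (𝒩 : G → Submodule k N)
    (hB : DirectSum.IsInternal ℬ) (hM : DirectSum.IsInternal ℳ)
    (hN : DirectSum.IsInternal 𝒩)
    (hB1 : (1 : B) ∈ ℬ 1)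
    (hMgr : ∀ α β γ : G, ∀ a ∈ ℬ α, ∀ x ∈ ℳ β, ∀ c ∈ ℬ γ,
      op c • (a • x) ∈ ℳ (α * β * γ))
    (hNgr : ∀ α β γ : G, ∀ a ∈ ℬ α, ∀ y ∈ 𝒩 β, ∀ c ∈ ℬ γ,
      op c • (a • y) ∈ 𝒩 (α * β * γ))
    -- the space of `B`-bimodule homomorphisms and its two subspaces
    (Hom₀ Hom₁ HomBe : Submodule k (M →ₗ[k] N))
    (hHomBe : HomBe = {f : M →ₗ[k] N |
        (∀ (b : B) (x : M), f (b • x) = b • f x) ∧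
        (∀ (b : Bᵐᵒᵖ) (x : M), f (b • x) = b • f x)})
    (hHom₀ : Hom₀ = {f ∈ HomBe | ∀ α : G, ∀ x ∈ ℳ α, f x ∈ 𝒩 α})
    (hHom₁ : Hom₁ = {f ∈ HomBe | ∀ α : G, ∀ x ∈ ℳ α,
        f x ∈ ⨆ β ∈ {β : G | β ≠ α}, 𝒩 β}) :
    Hom₀ ⊔ Hom₁ = HomBe ∧ Hom₀ ⊓ Hom₁ = ⊥ := by
  let := hB.chooseDecomposition
  let := hM.chooseDecomposition
  let := hN.chooseDecomposition
  have memBe := Set.ext_iff.1 hHomBe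
  have mem₀ := Set.ext_iff.1 hHom₀
  have mem₁ := Set.ext_iff.1 hHom₁
  refine ⟨le_antisymm (sup_le (fun f hf => ((mem₀ f).1 hf).1) fun f hf => ((mem₁ f).1 hf).1)
    fun f hf => ?_, eq_bot_iff.2 fun f hf => ?_⟩
  · obtain ⟨hleft, hright⟩ := (memBe f).1 hf
    set f₀ := diagPart ℳ 𝒩 f
    have hf₀ : f₀ ∈ HomBe := (memBe f₀).2
      ⟨diagPart_smul hB1 hMgr hNgr hleft, diagPart_op_smul hB1 hMgr hNgr hright⟩
    rw [← add_sub_cancel f₀ f]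
    refine Submodule.add_mem_sup ((mem₀ f₀).2 ⟨hf₀, fun α x hx => ?_⟩)
      ((mem₁ (f - f₀)).2 ⟨sub_mem hf hf₀, fun α x hx => ?_⟩)
    · rw [diagPart_apply_of_mem f hx]
      exact SetLike.coe_mem _
    · rw [LinearMap.sub_apply, diagPart_apply_of_mem f hx]
      exact sub_coe_decompose_mem_iSup_ne 𝒩 (f x) α
  · have h₀ := ((mem₀ f).1 hf.1).2
    have h₁ := ((mem₁ f).1 hf.2).2
    refine (Submodule.mem_bot k).2 (decompose_lhom_ext ℳ fun α => LinearMap.ext fun x => ?_)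
    exact (hN.submodule_iSupIndep α).le_bot ⟨h₀ α x x.2, h₁ α x x.2⟩

/-- let `B` be a `G`-graded `k`-algebra and `M`, `N` `G`-graded
`B`-bimodules.  Inside the space of `B`-bimodule homomorphisms `M → N`, the
grading-preserving ones (`f (M_α) ⊆ N_α`) and those killing every diagonal component
(`(f x)_α = 0` for `x ∈ M_α`, expressed as `f x ∈ ⨆_{β ≠ α} N_β`) form complementary
subspaces: their intersection is trivial and their sum is the whole space of bimodule
homomorphisms. -/
theorem stmt_19 (k G B M N : Type*) [Field k] [Group G] [DecidableEq G]
    [Ring B] [Algebra k B]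
    [AddCommGroup M] [Module k M] [Module B M] [Module Bᵐᵒᵖ M]
    [SMulCommClass B Bᵐᵒᵖ M] [IsScalarTower k B M] [IsScalarTower k Bᵐᵒᵖ M]
    [AddCommGroup N] [Module k N] [Module B N] [Module Bᵐᵒᵖ N]
    [SMulCommClass B Bᵐᵒᵖ N] [IsScalarTower k B N] [IsScalarTower k Bᵐᵒᵖ N]
    -- the `G`-grading on `B`, `M` and `N`
    (ℬ : G → Submodule k B) (ℳ : G → Submodule k M) (𝒩 : G → Submodule k N)
    (hB : DirectSum.IsInternal ℬ) (hM : DirectSum.IsInternal ℳ)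
    (hN : DirectSum.IsInternal 𝒩)
    (hB1 : (1 : B) ∈ ℬ 1)
    (hBmul : ∀ α β : G, ∀ a ∈ ℬ α, ∀ b ∈ ℬ β, a * b ∈ ℬ (α * β))
    (hMgr : ∀ α β γ : G, ∀ a ∈ ℬ α, ∀ x ∈ ℳ β, ∀ c ∈ ℬ γ,
      op c • (a • x) ∈ ℳ (α * β * γ))
    (hNgr : ∀ α β γ : G, ∀ a ∈ ℬ α, ∀ y ∈ 𝒩 β, ∀ c ∈ ℬ γ,
      op c • (a • y) ∈ 𝒩 (α * β * γ))
    -- the space of `B`-bimodule homomorphisms and its two subspaces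
    (Hom₀ Hom₁ HomBe : Submodule k (M →ₗ[k] N))
    (hHomBe : HomBe = {f : M →ₗ[k] N |
        (∀ (b : B) (x : M), f (b • x) = b • f x) ∧
        (∀ (b : Bᵐᵒᵖ) (x : M), f (b • x) = b • f x)})
    (hHom₀ : Hom₀ = {f ∈ HomBe | ∀ α : G, ∀ x ∈ ℳ α, f x ∈ 𝒩 α})
    (hHom₁ : Hom₁ = {f ∈ HomBe | ∀ α : G, ∀ x ∈ ℳ α,
        f x ∈ ⨆ β ∈ {β : G | β ≠ α}, 𝒩 β}) :
    Hom₀ ⊔ Hom₁ = HomBe ∧ Hom₀ ⊓ Hom₁ = ⊥ :=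
  stmt_19_general k G B M N ℬ ℳ 𝒩 hB hM hN hB1 hMgr hNgr Hom₀ Hom₁ HomBe hHomBe hHom₀ hHom₁
end
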